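/- Let F(u) := u − Σ_j P̃_j G_j(u) with differentiable G_j satisfying dG_j/du(u) = R_j − (R_j J(u^{(j)}) P_j)^{-1} R_j J(u^{(j)}), and assume Σ_j P̃_j R_j = I. Then the Jacobian of the RASPEN function is J_F(u) = Σ_j P̃_j (R_j J(u^{(j)}) P_j)^{-1} R_j J(u^{(j)}). -/

import Mathlib

/-!
Differentiating term by term, `F'(u) = I - Σ_j P̃_j (R_j - A_j)` with
`A_j = (R_j J(u⁽ʲ⁾) P_j)⁻¹ R_j J(u⁽ʲ⁾)`, and the partition of unity `Σ_j P̃_j R_j = I` cancels the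
identity, leaving `Σ_j P̃_j A_j`.
-/

theorem hasFDerivAt_id_sub_sum_comp {𝕜 E ι : Type*} {F : ι → Type*}
    [NontriviallyNormedField 𝕜] [NormedAddCommGroup E] [NormedSpace 𝕜 E]
    [∀ j, NormedAddCommGroup (F j)] [∀ j, NormedSpace 𝕜 (F j)] (s : Finset ι)
    (Pt : ∀ j, F j →L[𝕜] E) (R A : ∀ j, E →L[𝕜] F j) (G : ∀ j, E → F j) (u : E)
    (hPU : ∑ j ∈ s, (Pt j).comp (R j) = ContinuousLinearMap.id 𝕜 E)
    (hG : ∀ j ∈ s, HasFDerivAt (G j) (R j - A j) u) :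
    HasFDerivAt (fun w => w - ∑ j ∈ s, Pt j (G j w)) (∑ j ∈ s, (Pt j).comp (A j)) u := by
  have hsum : HasFDerivAt (fun w => ∑ j ∈ s, Pt j (G j w))
      (∑ j ∈ s, (Pt j).comp (R j - A j)) u :=
    HasFDerivAt.fun_sum fun j hj => (Pt j).hasFDerivAt.comp u (hG j hj)
  have hF := (hasFDerivAt_id u).sub hsum
  rwa [Finset.sum_congr rfl fun j _ => ContinuousLinearMap.comp_sub (Pt j) (R j) (A j),
    Finset.sum_sub_distrib, hPU, sub_sub_cancel] at hF

namespace Matrix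

variable {𝕜 : Type*} [NontriviallyNormedField 𝕜] [CompleteSpace 𝕜] {l m n : Type*} [Fintype n]

theorem toContinuousLinearMap_mulVecLin_mul [Fintype m] (A : Matrix l m 𝕜) (B : Matrix m n 𝕜) :
    (A * B).mulVecLin.toContinuousLinearMap =
      A.mulVecLin.toContinuousLinearMap.comp B.mulVecLin.toContinuousLinearMap := by
  ext; simp [mulVecLin_mul]

theorem toContinuousLinearMap_mulVecLin_sub (A B : Matrix m n 𝕜) :
    (A - B).mulVecLin.toContinuousLinearMap =
      A.mulVecLin.toContinuousLinearMap - B.mulVecLin.toContinuousLinearMap := by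
  ext; simp

theorem toContinuousLinearMap_mulVecLin_sum {ι : Type*} (s : Finset ι) (A : ι → Matrix m n 𝕜) :
    (∑ j ∈ s, A j).mulVecLin.toContinuousLinearMap =
      ∑ j ∈ s, (A j).mulVecLin.toContinuousLinearMap := by
  ext; simp

theorem toContinuousLinearMap_mulVecLin_one [DecidableEq n] :
    (1 : Matrix n n 𝕜).mulVecLin.toContinuousLinearMap = ContinuousLinearMap.id 𝕜 (n → 𝕜) := by
  ext; simp

end Matrix

theorem raspen_jacobian_general {N m : ℕ} {d : Fin m → ℕ}
    (R : ∀ j : Fin m, Matrix (Fin (d j)) (Fin N) ℝ)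
    (P : ∀ j : Fin m, Matrix (Fin N) (Fin (d j)) ℝ)
    (Pt : ∀ j : Fin m, Matrix (Fin N) (Fin (d j)) ℝ)
    (G : ∀ j : Fin m, (Fin N → ℝ) → (Fin (d j) → ℝ))
    (Jj : Fin m → Matrix (Fin N) (Fin N) ℝ)
    (u : Fin N → ℝ)
    (hPU : ∑ j, Pt j * R j = 1)
    (hdG : ∀ j, HasFDerivAt (G j) (LinearMap.toContinuousLinearMap
      (Matrix.mulVecLin (R j - (R j * Jj j * P j)⁻¹ * (R j * Jj j)))) u) :
    HasFDerivAt (fun w => w - ∑ j, (Pt j).mulVec (G j w))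
      (LinearMap.toContinuousLinearMap (Matrix.mulVecLin
        (∑ j, Pt j * ((R j * Jj j * P j)⁻¹ * (R j * Jj j))))) u := by
  have hPU_clm : ∑ j, (Pt j).mulVecLin.toContinuousLinearMap.comp (R j).mulVecLin.toContinuousLinearMap
      = ContinuousLinearMap.id ℝ (Fin N → ℝ) := by
    simp only [← Matrix.toContinuousLinearMap_mulVecLin_mul,
      ← Matrix.toContinuousLinearMap_mulVecLin_sum, hPU, Matrix.toContinuousLinearMap_mulVecLin_one]
  have hF := hasFDerivAt_id_sub_sum_comp Finset.univ _ _
    (fun j => ((R j * Jj j * P j)⁻¹ * (R j * Jj j)).mulVecLin.toContinuousLinearMap) G u hPU_clm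
    fun j _ => by simpa only [Matrix.toContinuousLinearMap_mulVecLin_sub] using hdG j
  rw [← Finset.sum_congr rfl fun j _ => Matrix.toContinuousLinearMap_mulVecLin_mul _ _,
    ← Matrix.toContinuousLinearMap_mulVecLin_sum] at hF
  exact hF

/-- Jacobian of the RASPEN function:
`J_F(u) = Σ_j P̃_j (R_j J(u⁽ʲ⁾) P_j)⁻¹ R_j J(u⁽ʲ⁾)`. -/
theorem raspen_jacobian {N m : ℕ} {d : Fin m → ℕ}
    (J : (Fin N → ℝ) → Matrix (Fin N) (Fin N) ℝ)
    (R : ∀ j : Fin m, Matrix (Fin (d j)) (Fin N) ℝ)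
    (P : ∀ j : Fin m, Matrix (Fin N) (Fin (d j)) ℝ)
    (Pt : ∀ j : Fin m, Matrix (Fin N) (Fin (d j)) ℝ)
    (G : ∀ j : Fin m, (Fin N → ℝ) → (Fin (d j) → ℝ))
    (Jj : Fin m → Matrix (Fin N) (Fin N) ℝ)
    (u : Fin N → ℝ)
    (hJj : ∀ j, Jj j = J ((P j).mulVec (G j u) + (1 - P j * R j).mulVec u))
    (hPU : ∑ j, Pt j * R j = 1)
    (hinv : ∀ j, IsUnit (R j * Jj j * P j))
    (hdG : ∀ j, HasFDerivAt (G j) (LinearMap.toContinuousLinearMap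
      (Matrix.mulVecLin (R j - (R j * Jj j * P j)⁻¹ * (R j * Jj j)))) u) :
    HasFDerivAt (fun w => w - ∑ j, (Pt j).mulVec (G j w))
      (LinearMap.toContinuousLinearMap (Matrix.mulVecLin
        (∑ j, Pt j * ((R j * Jj j * P j)⁻¹ * (R j * Jj j))))) u :=
  raspen_jacobian_general R P Pt G Jj u hPU hdG
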